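/- arXiv:0708.0425 — 3 statements merged into one kernel-verified Lean document; each statement's English description precedes it below -/
import Mathlib

section
/- Under the g-FOB model on a rooted phylogenetic X-tree with edge lengths, the variance of future phylogenetic diversity is Var[φ] = Σ_e λ_e² P_e (1 − P_e) + 2 Σ_{(e,f) : C(f) ⊊ C(e)} λ_e λ_f P_f (1 − P_e), where the second sum ranges over ordered pairs of distinct edges (e,f) whose clusters satisfy C(f) strictly contained in C(e). -/
/-!
Write `A e` for the event that some taxon of `C e` survives, so that `Y e` is its indicator and
`Var[φ] = ∑ e, ∑ f, λ_e λ_f cov[Y e, Y f]`. For indicators, `cov = P(A ∩ B) - P(A) P(B)`.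
Laminarity leaves two cases for distinct edges: nested clusters give nested events, whose
covariance is `P(A_f) (1 - P(A_e))`, and disjoint clusters give independent events (the taxa
survive independently), whose covariance vanishes. The diagonal terms are the variances
`P_e (1 - P_e)`, and each strictly nested pair occurs twice in the symmetric double sum.
-/

open MeasureTheory ProbabilityTheory Finset
open scoped Classical

theorem Finset.sum_sum_eq_sum_diag_add_two_mul_sum_filter {η R : Type*} [Fintype η] [Semiring R]
    (K : η → η → R) (p : η × η → Prop) [DecidablePred p]
    (hp : ∀ e f, p (e, f) → ¬ p (f, e)) (hK : ∀ e f, K e f = K f e)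
    (hK0 : ∀ e f, e ≠ f → ¬ p (e, f) → ¬ p (f, e) → K e f = 0) :
    ∑ e, ∑ f, K e f = ∑ e, K e e + 2 * ∑ ef ∈ univ.filter p, K ef.1 ef.2 := by
  have split : ∀ e f, K e f = (if e = f then K e e else 0) + (if p (e, f) then K e f else 0)
      + (if p (f, e) then K f e else 0) := by
    intro e f
    by_cases hef : e = f
    · subst hef
      have := hp e e
      by_cases h : p (e, e) <;> simp_all
    · by_cases h : p (e, f)
      · simp [hef, h, hp e f h]
      · by_cases h' : p (f, e)
        · simp [hef, h, h', hK]
        · simp [hef, h, h', hK0 e f hef h h']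
  have hfilter :
      ∑ e, ∑ f, (if p (e, f) then K e f else 0) = ∑ ef ∈ univ.filter p, K ef.1 ef.2 := by
    rw [sum_filter, ← univ_product_univ, sum_product]
  have hswap :
      ∑ e, ∑ f, (if p (f, e) then K f e else 0) = ∑ ef ∈ univ.filter p, K ef.1 ef.2 := by
    rw [sum_comm]; exact hfilter
  calc ∑ e, ∑ f, K e f
      = ∑ e, ∑ f, ((if e = f then K e e else 0) + (if p (e, f) then K e f else 0)
          + (if p (f, e) then K f e else 0)) :=
        sum_congr rfl fun e _ ↦ sum_congr rfl fun f _ ↦ split e f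
    _ = ∑ e, K e e + 2 * ∑ ef ∈ univ.filter p, K ef.1 ef.2 := by
        simp only [sum_add_distrib, hfilter, hswap]
        simp [two_mul, add_assoc]

namespace ProbabilityTheory

section Covariance

variable {Ω : Type*} [MeasurableSpace Ω] {μ : Measure Ω} {A B : Set Ω}

theorem memLp_indicator_one [IsFiniteMeasure μ] (hA : MeasurableSet A) :
    MemLp (A.indicator (1 : Ω → ℝ)) 2 μ :=
  memLp_indicator_const 2 hA 1 (Or.inr (measure_ne_top μ A))

variable [IsProbabilityMeasure μ]

theorem covariance_indicator_one (hA : MeasurableSet A) (hB : MeasurableSet B) :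
    cov[A.indicator 1, B.indicator 1; μ] = μ.real (A ∩ B) - μ.real A * μ.real B := by
  rw [covariance_eq_sub (memLp_indicator_one hA) (memLp_indicator_one hB),
    ← Set.inter_indicator_one, integral_indicator_one hA, integral_indicator_one hB,
    integral_indicator_one (hA.inter hB)]

theorem covariance_indicator_one_of_subset (hA : MeasurableSet A) (hB : MeasurableSet B)
    (hAB : A ⊆ B) :
    cov[A.indicator 1, B.indicator 1; μ] = μ.real A * (1 - μ.real B) := by
  rw [covariance_indicator_one hA hB, Set.inter_eq_left.mpr hAB]
  ring

theorem IndepSet.covariance_indicator_one_eq_zero (hA : MeasurableSet A) (hB : MeasurableSet B)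
    (hAB : IndepSet A B μ) : cov[A.indicator 1, B.indicator 1; μ] = 0 := by
  rw [covariance_indicator_one hA hB, measureReal_def, measureReal_def, measureReal_def,
    hAB.measure_inter_eq_mul, ENNReal.toReal_mul, sub_self]

theorem variance_fun_sum_const_mul {η : Type*} [Fintype η] {X : η → Ω → ℝ}
    (hX : ∀ e, MemLp (X e) 2 μ) (c : η → ℝ) :
    Var[fun ω ↦ ∑ e, c e * X e ω; μ] = ∑ e, ∑ f, c e * c f * cov[X e, X f; μ] := by
  have hcX : ∀ e, MemLp (fun ω ↦ c e * X e ω) 2 μ := fun e ↦ (hX e).const_mul (c e)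
  rw [← covariance_self (memLp_finsetSum _ fun e _ ↦ hcX e).aemeasurable,
    covariance_fun_sum_fun_sum hcX hcX]
  simp only [covariance_const_mul_left, covariance_const_mul_right]
  exact sum_congr rfl fun e _ ↦ sum_congr rfl fun f _ ↦ by ring

end Covariance

section Survival

variable {Ω ι : Type*} (surv : ι → Ω → Bool)

def survivalEvent (s : Finset ι) : Set Ω := {ω | ∃ i ∈ s, surv i ω = true}

variable {surv}

theorem measurableSet_survivalEvent [MeasurableSpace Ω] (hmeas : ∀ i, Measurable (surv i))
    (s : Finset ι) :
    MeasurableSet (survivalEvent surv s) := by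
  have : survivalEvent surv s = ⋃ i ∈ s, surv i ⁻¹' {true} := by
    ext ω; simp [survivalEvent]
  rw [this]
  exact s.measurableSet_biUnion fun i _ ↦ hmeas i (measurableSet_singleton true)

theorem survivalEvent_mono {s t : Finset ι} (hst : s ⊆ t) :
    survivalEvent surv s ⊆ survivalEvent surv t :=
  fun _ ⟨i, hi, h⟩ ↦ ⟨i, hst hi, h⟩

theorem iIndepFun.indepSet_survivalEvent [MeasurableSpace Ω] {μ : Measure Ω}
    [IsZeroOrProbabilityMeasure μ] (hindep : iIndepFun surv μ)
    (hmeas : ∀ i, Measurable (surv i)) {s t : Finset ι} (hst : Disjoint s t) :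
    IndepSet (survivalEvent surv s) (survivalEvent surv t) μ := by
  have hpre : ∀ u : Finset ι, survivalEvent surv u =
      (fun ω (i : u) ↦ surv i ω) ⁻¹' {v | ∃ i, v i = true} := by
    intro u; ext ω; simp [survivalEvent]
  rw [hpre, hpre]
  have hsurv : ∀ u : Finset ι, Measurable fun ω (i : u) ↦ surv i ω :=
    fun u ↦ measurable_pi_lambda _ fun i ↦ hmeas i
  exact (indepFun_iff_indepSet_preimage (hsurv s) (hsurv t)).mp
    (hindep.indepFun_finset s t hst hmeas) _ _
    (Set.toFinite _).measurableSet (Set.toFinite _).measurableSet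

end Survival

end ProbabilityTheory

theorem variance_of_future_PD_general
    {Ω : Type*} [MeasurableSpace Ω] (μ : Measure Ω) [IsProbabilityMeasure μ]
    {ι : Type*} [Fintype ι]
    (surv : ι → Ω → Bool)
    (hmeas : ∀ i, Measurable (surv i))
    (hindep : iIndepFun surv μ)
    -- the tree: edges `η`, distinct clusters `C` forming a laminar family, lengths `lam`
    {η : Type*} [Fintype η]
    (C : η → Finset ι)
    (hC_distinct : Function.Injective C)
    (hC_laminar : ∀ e f, C e ⊆ C f ∨ C f ⊆ C e ∨ Disjoint (C e) (C f))
    (lam : η → ℝ)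
    (Y : η → Ω → ℝ)
    (hY : ∀ e ω, Y e ω = if ∃ i ∈ C e, surv i ω = true then 1 else 0)
    (P : η → ℝ) (hP : ∀ e, P e = (μ {ω | Y e ω = 1}).toReal)
    (φ : Ω → ℝ) (hφ : ∀ ω, φ ω = ∑ e, lam e * Y e ω) :
    variance φ μ =
      (∑ e, (lam e) ^ 2 * P e * (1 - P e)) +
      2 * ∑ ef ∈ Finset.univ.filter (fun ef : η × η => C ef.2 ⊂ C ef.1),
            lam ef.1 * lam ef.2 * P ef.2 * (1 - P ef.1) := by
  set A := fun e ↦ survivalEvent surv (C e)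
  have hA : ∀ e, MeasurableSet (A e) := fun e ↦ measurableSet_survivalEvent hmeas (C e)
  obtain rfl : Y = fun e ↦ (A e).indicator 1 := by
    ext e ω; simp [hY, A, survivalEvent, Set.indicator_apply]
  obtain rfl : P = fun e ↦ μ.real (A e) := by
    ext e; rw [hP, measureReal_def]; congr 2; ext ω; simp [Set.indicator_apply]
  obtain rfl : φ = fun ω ↦ ∑ e, lam e * (A e).indicator 1 ω := funext hφ
  have hnested : ∀ e f, C f ⊆ C e →
      cov[(A f).indicator 1, (A e).indicator 1; μ] = μ.real (A f) * (1 - μ.real (A e)) :=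
    fun e f h ↦ covariance_indicator_one_of_subset (hA f) (hA e) (survivalEvent_mono h)
  have hindependent : ∀ e f, e ≠ f → ¬ C f ⊂ C e → ¬ C e ⊂ C f →
      cov[(A e).indicator 1, (A f).indicator 1; μ] = 0 := by
    intro e f hef h h'
    refine (hindep.indepSet_survivalEvent hmeas ?_).covariance_indicator_one_eq_zero (hA e) (hA f)
    rcases hC_laminar e f with hsub | hsub | hdisj
    · exact absurd (hsub.ssubset_of_ne (hC_distinct.ne hef)) h'
    · exact absurd (hsub.ssubset_of_ne (hC_distinct.ne hef.symm)) h
    · exact hdisj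
  rw [variance_fun_sum_const_mul (fun e ↦ memLp_indicator_one (hA e)),
    sum_sum_eq_sum_diag_add_two_mul_sum_filter _ (fun ef ↦ C ef.2 ⊂ C ef.1)
      (fun e f h h' ↦ ssubset_asymm h h')
      (fun e f ↦ by rw [covariance_comm]; ring)
      (fun e f hef h h' ↦ by rw [hindependent e f hef h h', mul_zero])]
  congr 1
  · refine sum_congr rfl fun e _ ↦ ?_
    rw [hnested e e subset_rfl]; ring
  · refine congrArg _ (sum_congr rfl fun ef hef ↦ ?_)
    rw [covariance_comm, hnested _ _ (mem_filter.mp hef).2.subset]; ring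

/-- Under the g-FOB model on a rooted phylogenetic tree (encoded by the
distinct clusters `C e` of its edges, forming a laminar family), the variance of future
phylogenetic diversity `φ = ∑ e, lam e * Y e` is
`Var[φ] = ∑ e, (lam e)^2 * P e * (1 - P e)
        + 2 * ∑_{(e,f) : C f ⊊ C e} lam e * lam f * P f * (1 - P e)`,
where the second sum ranges over ordered pairs of distinct edges `(e, f)` with
`C f` strictly contained in `C e`. -/
theorem variance_of_future_PD
    {Ω : Type*} [MeasurableSpace Ω] (μ : Measure Ω) [IsProbabilityMeasure μ]
    {ι : Type*} [Fintype ι]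
    (surv : ι → Ω → Bool)
    (hmeas : ∀ i, Measurable (surv i))
    (hindep : iIndepFun surv μ)
    (p : ι → ℝ) (hp01 : ∀ i, p i ∈ Set.Icc (0 : ℝ) 1)
    (hp : ∀ i, (μ {ω | surv i ω = true}).toReal = p i)
    -- the tree: edges `η`, distinct clusters `C` forming a laminar family, lengths `lam`
    {η : Type*} [Fintype η]
    (C : η → Finset ι) (hC : ∀ e, (C e).Nonempty)
    (hC_distinct : Function.Injective C)
    (hC_laminar : ∀ e f, C e ⊆ C f ∨ C f ⊆ C e ∨ Disjoint (C e) (C f))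
    (lam : η → ℝ) (hlam : ∀ e, 0 ≤ lam e)
    (Y : η → Ω → ℝ)
    (hY : ∀ e ω, Y e ω = if ∃ i ∈ C e, surv i ω = true then 1 else 0)
    (P : η → ℝ) (hP : ∀ e, P e = (μ {ω | Y e ω = 1}).toReal)
    (φ : Ω → ℝ) (hφ : ∀ ω, φ ω = ∑ e, lam e * Y e ω) :
    variance φ μ =
      (∑ e, (lam e) ^ 2 * P e * (1 - P e)) +
      2 * ∑ ef ∈ Finset.univ.filter (fun ef : η × η => C ef.2 ⊂ C ef.1),
            lam ef.1 * lam ef.2 * P ef.2 * (1 - P ef.1) :=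
  variance_of_future_PD_general μ surv hmeas hindep C hC_distinct hC_laminar lam Y hY P hP φ hφ
end

section
/- Let m ∈ ℕ, let (φ_c, Y_c) and (φ_d, Y_d) be two independent pairs of random variables where φ_c, φ_d take values in ℕ and Y_c, Y_d take values in {0,1}, and suppose that almost surely Y_c = 0 implies φ_c = 0 and Y_d = 0 implies φ_d = 0. Define Y_e = max(Y_c, Y_d) and φ_e = m·Y_e + φ_c + φ_d, and set f_g(x) = P[φ_g = x, Y_g = 1] and P_g = P[Y_g = 1] for g ∈ {c, d, e}. Then for every integer x ≥ m: f_e(x) = Σ_{i=0}^{x−m} f_c(i)·f_d(x−m−i) + (1−P_d)·f_c(x−m) + (1−P_c)·f_d(x−m). -/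
open MeasureTheory ProbabilityTheory Finset

/-- Let `m ∈ ℕ`, and let `(φc, Yc)` and `(φd, Yd)` be two independent
pairs of random variables, with `φc, φd` valued in `ℕ`, `Yc, Yd` valued in `{0,1} ⊆ ℕ`,
such that a.s. `Yc = 0 → φc = 0` and `Yd = 0 → φd = 0`.  Define `Ye = max Yc Yd` and
`φe = m * Ye + φc + φd`, and set `f_g(x) = P[φ_g = x, Y_g = 1]`, `P_g = P[Y_g = 1]`.
Then for every `x ≥ m`:
`f_e(x) = ∑_{i=0}^{x-m} f_c(i) f_d(x-m-i) + (1-P_d) f_c(x-m) + (1-P_c) f_d(x-m)`. -/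
theorem rooted_PD_distribution_recursion
    {Ω : Type*} [MeasurableSpace Ω] (μ : Measure Ω) [IsProbabilityMeasure μ]
    (m : ℕ)
    (φc φd : Ω → ℕ) (Yc Yd : Ω → ℕ)
    (hYc01 : ∀ ω, Yc ω ≤ 1) (hYd01 : ∀ ω, Yd ω ≤ 1)
    (hφc : Measurable φc) (hφd : Measurable φd)
    (hYc : Measurable Yc) (hYd : Measurable Yd)
    (hindep : IndepFun (fun ω => (φc ω, Yc ω)) (fun ω => (φd ω, Yd ω)) μ)
    (hc0 : ∀ᵐ ω ∂μ, Yc ω = 0 → φc ω = 0)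
    (hd0 : ∀ᵐ ω ∂μ, Yd ω = 0 → φd ω = 0)
    (Ye : Ω → ℕ) (hYe : ∀ ω, Ye ω = max (Yc ω) (Yd ω))
    (φe : Ω → ℕ) (hφe : ∀ ω, φe ω = m * Ye ω + φc ω + φd ω)
    -- the partial distribution functions and survival probabilities
    (fc fd fe : ℕ → ℝ)
    (hfc : ∀ x, fc x = (μ {ω | φc ω = x ∧ Yc ω = 1}).toReal)
    (hfd : ∀ x, fd x = (μ {ω | φd ω = x ∧ Yd ω = 1}).toReal)
    (hfe : ∀ x, fe x = (μ {ω | φe ω = x ∧ Ye ω = 1}).toReal)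
    (Pc Pd : ℝ)
    (hPc : Pc = (μ {ω | Yc ω = 1}).toReal)
    (hPd : Pd = (μ {ω | Yd ω = 1}).toReal) :
    ∀ x : ℕ, m ≤ x →
      fe x = (∑ i ∈ Finset.range (x - m + 1), fc i * fd (x - m - i))
        + (1 - Pd) * fc (x - m) + (1 - Pc) * fd (x - m) := by
  intro x hmx
  set n := x - m with hn
  -- basic sets
  set A : ℕ → Set Ω := fun i => {ω | φc ω = i ∧ Yc ω = 1} with hA
  set B : ℕ → Set Ω := fun j => {ω | φd ω = j ∧ Yd ω = 1} with hB
  set C0 : Set Ω := {ω | Yc ω = 0} with hC0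
  set D0 : Set Ω := {ω | Yd ω = 0} with hD0
  have hApre : ∀ i, A i = (fun ω => (φc ω, Yc ω)) ⁻¹' ({i} ×ˢ {1}) := by
    intro i; ext ω
    show φc ω = i ∧ Yc ω = 1 ↔ (φc ω, Yc ω) ∈ ({i} ×ˢ {1} : Set (ℕ × ℕ))
    simp [Prod.ext_iff]
  have hBpre : ∀ j, B j = (fun ω => (φd ω, Yd ω)) ⁻¹' ({j} ×ˢ {1}) := by
    intro j; ext ω
    show φd ω = j ∧ Yd ω = 1 ↔ (φd ω, Yd ω) ∈ ({j} ×ˢ {1} : Set (ℕ × ℕ))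
    simp [Prod.ext_iff]
  have hC0pre : C0 = (fun ω => (φc ω, Yc ω)) ⁻¹' (Set.univ ×ˢ {0}) := by
    ext ω
    show Yc ω = 0 ↔ (φc ω, Yc ω) ∈ (Set.univ ×ˢ {0} : Set (ℕ × ℕ))
    simp [eq_comm]
  have hD0pre : D0 = (fun ω => (φd ω, Yd ω)) ⁻¹' (Set.univ ×ˢ {0}) := by
    ext ω
    show Yd ω = 0 ↔ (φd ω, Yd ω) ∈ (Set.univ ×ˢ {0} : Set (ℕ × ℕ))
    simp [eq_comm]
  have hAmeas : ∀ i, MeasurableSet (A i) := by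
    intro i; rw [hApre]
    exact (hφc.prodMk hYc) (MeasurableSet.prod (measurableSet_singleton i)
      (measurableSet_singleton 1))
  have hBmeas : ∀ j, MeasurableSet (B j) := by
    intro j; rw [hBpre]
    exact (hφd.prodMk hYd) (MeasurableSet.prod (measurableSet_singleton j)
      (measurableSet_singleton 1))
  have hC0meas : MeasurableSet C0 := by
    rw [hC0pre]
    exact (hφc.prodMk hYc) (MeasurableSet.prod MeasurableSet.univ (measurableSet_singleton 0))
  have hD0meas : MeasurableSet D0 := by
    rw [hD0pre]
    exact (hφd.prodMk hYd) (MeasurableSet.prod MeasurableSet.univ (measurableSet_singleton 0))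
  -- independence consequences
  have hAB : ∀ i j, μ (A i ∩ B j) = μ (A i) * μ (B j) := by
    intro i j
    rw [hApre, hBpre]
    exact hindep.measure_inter_preimage_eq_mul _ _
      (MeasurableSet.prod (measurableSet_singleton i) (measurableSet_singleton 1))
      (MeasurableSet.prod (measurableSet_singleton j) (measurableSet_singleton 1))
  have hAD0 : μ (A n ∩ D0) = μ (A n) * μ D0 := by
    rw [hApre, hD0pre]
    exact hindep.measure_inter_preimage_eq_mul _ _
      (MeasurableSet.prod (measurableSet_singleton n) (measurableSet_singleton 1))
      (MeasurableSet.prod MeasurableSet.univ (measurableSet_singleton 0))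
  have hC0B : μ (C0 ∩ B n) = μ C0 * μ (B n) := by
    rw [hC0pre, hBpre]
    exact hindep.measure_inter_preimage_eq_mul _ _
      (MeasurableSet.prod MeasurableSet.univ (measurableSet_singleton 0))
      (MeasurableSet.prod (measurableSet_singleton n) (measurableSet_singleton 1))
  -- complement probabilities
  have hD0toReal : (μ D0).toReal = 1 - Pd := by
    have hdisj : Disjoint D0 {ω | Yd ω = 1} := by
      rw [Set.disjoint_left]; rintro ω h1 h2
      exact absurd (h1.symm.trans h2) (by norm_num)
    have hcover : D0 ∪ {ω | Yd ω = 1} = Set.univ := by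
      ext ω; simp only [Set.mem_union, Set.mem_univ, iff_true, hD0, Set.mem_setOf_eq]
      have := hYd01 ω; omega
    have h1 : μ D0 + μ {ω | Yd ω = 1} = 1 := by
      rw [← measure_union hdisj (hYd (measurableSet_singleton 1)), hcover, measure_univ]
    have h2 := congrArg ENNReal.toReal h1
    rw [ENNReal.toReal_add (measure_ne_top μ _) (measure_ne_top μ _), ENNReal.toReal_one] at h2
    rw [hPd]; linarith
  have hC0toReal : (μ C0).toReal = 1 - Pc := by
    have hdisj : Disjoint C0 {ω | Yc ω = 1} := by
      rw [Set.disjoint_left]; rintro ω h1 h2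
      exact absurd (h1.symm.trans h2) (by norm_num)
    have hcover : C0 ∪ {ω | Yc ω = 1} = Set.univ := by
      ext ω; simp only [Set.mem_union, Set.mem_univ, iff_true, hC0, Set.mem_setOf_eq]
      have := hYc01 ω; omega
    have h1 : μ C0 + μ {ω | Yc ω = 1} = 1 := by
      rw [← measure_union hdisj (hYc (measurableSet_singleton 1)), hcover, measure_univ]
    have h2 := congrArg ENNReal.toReal h1
    rw [ENNReal.toReal_add (measure_ne_top μ _) (measure_ne_top μ _), ENNReal.toReal_one] at h2
    rw [hPc]; linarith
  -- the decomposition set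
  set G : Set Ω := (⋃ i ∈ Finset.range (n + 1), A i ∩ B (n - i)) ∪
      ((A n ∩ D0) ∪ (C0 ∩ B n)) with hG
  -- a.e. equality of events
  have hEG : {ω | φe ω = x ∧ Ye ω = 1} =ᵐ[μ] G := by
    rw [Filter.eventuallyEq_set]
    filter_upwards [hc0, hd0] with ω h1 h2
    simp only [hG, Set.mem_union, Set.mem_iUnion, Finset.mem_range, Set.mem_inter_iff,
      Set.mem_setOf_eq, hA, hB, hC0, hD0]
    rw [hφe ω, hYe ω]
    rcases Nat.le_one_iff_eq_zero_or_eq_one.mp (hYc01 ω) with hyc | hyc <;>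
      rcases Nat.le_one_iff_eq_zero_or_eq_one.mp (hYd01 ω) with hyd | hyd
    · simp only [hyc, hyd]; simp
    · have hp := h1 hyc
      simp only [hyc, hyd, hp, show (0 ⊔ 1 : ℕ) = 1 from rfl]
      simp only [one_ne_zero, and_false, false_and, exists_false, false_or, and_true, true_and,
        eq_self_iff_true]
      constructor
      · intro hx; exact Or.inr (by omega)
      · rintro (h | h) <;> omega
    · have hp := h2 hyd
      simp only [hyc, hyd, hp, show (1 ⊔ 0 : ℕ) = 1 from rfl]
      simp only [one_ne_zero, zero_ne_one, and_false, false_and, exists_false, false_or, or_false,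
        and_true, true_and, eq_self_iff_true]
      constructor
      · intro hx; omega
      · intro h; omega
    · simp only [hyc, hyd, show (1 ⊔ 1 : ℕ) = 1 from rfl]
      simp only [one_ne_zero, and_false, false_and, and_true, true_and, or_false,
        eq_self_iff_true, exists_prop]
      constructor
      · intro hx; exact ⟨φc ω, by omega, rfl, by omega⟩
      · rintro ⟨i, hi, hci, hdi⟩; omega
  -- measure of G as a sum
  have hdisj1 : Disjoint (⋃ i ∈ Finset.range (n + 1), A i ∩ B (n - i))
      ((A n ∩ D0) ∪ (C0 ∩ B n)) := by
    rw [Set.disjoint_left]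
    rintro ω hω hω'
    simp only [Set.mem_iUnion, Finset.mem_range, Set.mem_inter_iff, Set.mem_setOf_eq,
      hA, hB] at hω
    obtain ⟨i, -, ⟨-, hyc1⟩, -, hyd1⟩ := hω
    rcases hω' with ⟨-, h0⟩ | ⟨h0, -⟩ <;>
      simp only [hD0, hC0, Set.mem_setOf_eq] at h0 <;> omega
  have hdisj2 : Disjoint (A n ∩ D0) (C0 ∩ B n) := by
    rw [Set.disjoint_left]
    rintro ω ⟨hA', hD'⟩ ⟨hC', hB'⟩
    simp only [hA, hC0, Set.mem_setOf_eq] at hA' hC'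
    omega
  have hdisjU : (↑(Finset.range (n + 1)) : Set ℕ).PairwiseDisjoint
      (fun i => A i ∩ B (n - i)) := by
    intro i _ j _ hij
    rw [Function.onFun, Set.disjoint_left]
    rintro ω ⟨hAi, -⟩ ⟨hAj, -⟩
    simp only [hA, Set.mem_setOf_eq] at hAi hAj
    exact hij (hAi.1.symm.trans hAj.1)
  have hmeasU : μ (⋃ i ∈ Finset.range (n + 1), A i ∩ B (n - i)) =
      ∑ i ∈ Finset.range (n + 1), μ (A i ∩ B (n - i)) :=
    measure_biUnion_finset hdisjU (fun i _ => (hAmeas i).inter (hBmeas (n - i)))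
  have hmeasG : μ G = (∑ i ∈ Finset.range (n + 1), μ (A i ∩ B (n - i))) +
      (μ (A n ∩ D0) + μ (C0 ∩ B n)) := by
    rw [hG, measure_union hdisj1 (((hAmeas n).inter hD0meas).union (hC0meas.inter (hBmeas n))),
      measure_union hdisj2 (hC0meas.inter (hBmeas n)), hmeasU]
  -- assemble
  rw [hfe, measure_congr hEG, hmeasG, ENNReal.toReal_add, ENNReal.toReal_add,
    ENNReal.toReal_sum (fun i _ => measure_ne_top μ _)]
  · simp only [hAB, hAD0, hC0B, ENNReal.toReal_mul]
    rw [hD0toReal, hC0toReal]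
    have hfc' : ∀ i, fc i = (μ (A i)).toReal := fun i => hfc i
    have hfd' : ∀ j, fd j = (μ (B j)).toReal := fun j => hfd j
    simp only [hfc', hfd']
    ring
  · exact measure_ne_top μ _
  · exact measure_ne_top μ _
  · exact ENNReal.sum_ne_top.2 (fun i _ => measure_ne_top μ _)
  · exact ENNReal.add_ne_top.2 ⟨measure_ne_top μ _, measure_ne_top μ _⟩
end

section
/- Let (φ_c, φ'_c, Y_c) and (φ_d, φ'_d, Y_d) be two independent triples of random variables where φ_c, φ'_c, φ_d, φ'_d take values in ℕ and Y_c, Y_d take values in {0,1}, and suppose that almost surely Y_c = 0 implies φ_c = 0 and φ'_c = 0, and Y_d = 0 implies φ_d = 0 and φ'_d = 0. Define Y_e = max(Y_c, Y_d) and φ'_e = φ_c + φ_d if Y_c = Y_d = 1, φ'_e = φ'_c if Y_c = 1 and Y_d = 0, φ'_e = φ'_d if Y_c = 0 and Y_d = 1, and φ'_e = 0 otherwise. Set f_g(x) = P[φ_g = x, Y_g = 1], f'_g(x) = P[φ'_g = x, Y_g = 1] and P_g = P[Y_g = 1]. Then for every x ∈ ℕ: f'_e(x) = Σ_{i=0}^{x}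 f_c(i)·f_d(x−i) + (1−P_d)·f'_c(x) + (1−P_c)·f'_d(x). -/
open MeasureTheory ProbabilityTheory Finset

/-!
Split the event `{φ'e = x, Ye = 1}` according to which of `Yc`, `Yd` equal `1`. On
`{Yc = Yd = 1}` we have `φ'e = φc + φd`, so by independence its probability is the
convolution of the defective densities `fc` and `fd`; on `{Yc = 1, Yd ≠ 1}` we have
`φ'e = φ'c`, with probability `f'c x * (1 - Pd)` by independence, and symmetrically on
`{Yc ≠ 1, Yd = 1}`.
-/

/-- The unrooted contribution `φ'e` as a function of the triples `(φc, φ'c, Yc)` and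
`(φd, φ'd, Yd)`. -/
def unrootedMerge (c d : ℕ × ℕ × ℕ) : ℕ :=
  if c.2.2 = 1 ∧ d.2.2 = 1 then c.1 + d.1
  else if c.2.2 = 1 then c.2.1
  else if d.2.2 = 1 then d.2.1
  else 0

namespace ProbabilityTheory.IndepFun

variable {Ω : Type*} [MeasurableSpace Ω] {μ : Measure Ω}

section Countable

variable {α β : Type*} [MeasurableSpace α] [Countable α] [MeasurableSingletonClass α]
  [MeasurableSpace β] [Countable β] [MeasurableSingletonClass β] {X : Ω → α} {Z : Ω → β}

theorem measureReal_setOf_and_eq_mul (h : IndepFun X Z μ) (p : α → Prop) (q : β → Prop) :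
    μ.real {ω | p (X ω) ∧ q (Z ω)} = μ.real {ω | p (X ω)} * μ.real {ω | q (Z ω)} := by
  simp only [measureReal_def]
  rw [← ENNReal.toReal_mul]
  exact congrArg _ (h.measure_inter_preimage_eq_mul {a | p a} {b | q b}
    (Set.to_countable _).measurableSet (Set.to_countable _).measurableSet)

theorem measureReal_setOf_add_eq_sum [IsFiniteMeasure μ] (hX : Measurable X)
    (hZ : Measurable Z) (h : IndepFun X Z μ) (p : α → Prop) (q : β → Prop)
    (u : α → ℕ) (v : β → ℕ) (x : ℕ) :
    μ.real {ω | p (X ω) ∧ q (Z ω) ∧ u (X ω) + v (Z ω) = x} =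
      ∑ i ∈ range (x + 1),
        μ.real {ω | u (X ω) = i ∧ p (X ω)} *
          μ.real {ω | v (Z ω) = x - i ∧ q (Z ω)} := by
  have hfibres : {ω | p (X ω) ∧ q (Z ω) ∧ u (X ω) + v (Z ω) = x} =
      ⋃ i ∈ range (x + 1),
        {ω | (u (X ω) = i ∧ p (X ω)) ∧ (v (Z ω) = x - i ∧ q (Z ω))} := by
    ext ω
    simp only [Set.mem_ofPred_eq, Set.mem_iUnion, mem_range, exists_prop]
    constructor
    · rintro ⟨hp, hq, hx⟩
      exact ⟨u (X ω), by omega, ⟨rfl, hp⟩, by omega, hq⟩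
    · rintro ⟨i, hi, ⟨rfl, hp⟩, hv, hq⟩
      exact ⟨hp, hq, by omega⟩
  rw [hfibres, measureReal_biUnion_finset]
  · exact sum_congr rfl fun i _ ↦ h.measureReal_setOf_and_eq_mul (fun a ↦ u a = i ∧ p a)
      (fun b ↦ v b = x - i ∧ q b)
  · intro i _ j _ hij
    exact Set.disjoint_left.mpr fun ω ⟨⟨hi, _⟩, _⟩ ⟨⟨hj, _⟩, _⟩ ↦ hij (hi ▸ hj)
  · exact fun i _ ↦ (hX (Set.to_countable {a | u a = i ∧ p a}).measurableSet).inter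
      (hZ (Set.to_countable {b | v b = x - i ∧ q b}).measurableSet)

end Countable

theorem measureReal_unrootedMerge [IsProbabilityMeasure μ] {X Z : Ω → ℕ × ℕ × ℕ}
    (hX : Measurable X) (hZ : Measurable Z) (h : IndepFun X Z μ) (x : ℕ) :
    μ.real {ω | unrootedMerge (X ω) (Z ω) = x ∧ ((X ω).2.2 = 1 ∨ (Z ω).2.2 = 1)} =
      (∑ i ∈ range (x + 1), μ.real {ω | (X ω).1 = i ∧ (X ω).2.2 = 1} *
          μ.real {ω | (Z ω).1 = x - i ∧ (Z ω).2.2 = 1})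
        + (1 - μ.real {ω | (Z ω).2.2 = 1}) * μ.real {ω | (X ω).2.1 = x ∧ (X ω).2.2 = 1}
        + (1 - μ.real {ω | (X ω).2.2 = 1}) *
          μ.real {ω | (Z ω).2.1 = x ∧ (Z ω).2.2 = 1} := by
  have hsplit : {ω | unrootedMerge (X ω) (Z ω) = x ∧ ((X ω).2.2 = 1 ∨ (Z ω).2.2 = 1)} =
      {ω | (X ω).2.2 = 1 ∧ (Z ω).2.2 = 1 ∧ (X ω).1 + (Z ω).1 = x} ∪
        {ω | ((X ω).2.1 = x ∧ (X ω).2.2 = 1) ∧ (Z ω).2.2 ≠ 1} ∪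
        {ω | (X ω).2.2 ≠ 1 ∧ ((Z ω).2.1 = x ∧ (Z ω).2.2 = 1)} := by
    ext ω
    simp only [Set.mem_ofPred_eq, Set.mem_union, unrootedMerge]
    split_ifs <;> omega
  have hcompl {W : Ω → ℕ × ℕ × ℕ} (hW : Measurable W) :
      μ.real {ω | (W ω).2.2 ≠ 1} = 1 - μ.real {ω | (W ω).2.2 = 1} := by
    rw [← probReal_compl_eq_one_sub (by measurability), Set.compl_ofPred]
  rw [hsplit, measureReal_union _ (by measurability), measureReal_union _ (by measurability),
    h.measureReal_setOf_add_eq_sum hX hZ (·.2.2 = 1) (·.2.2 = 1) Prod.fst Prod.fst,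
    h.measureReal_setOf_and_eq_mul (fun a ↦ a.2.1 = x ∧ a.2.2 = 1) (·.2.2 ≠ 1),
    h.measureReal_setOf_and_eq_mul (·.2.2 ≠ 1) (fun b ↦ b.2.1 = x ∧ b.2.2 = 1),
    hcompl hX, hcompl hZ]
  · ring
  all_goals
    simp only [Set.disjoint_left, Set.mem_union, Set.mem_ofPred_eq]
    intro ω
    omega

end ProbabilityTheory.IndepFun

theorem unrooted_PD_distribution_recursion_general
    {Ω : Type*} [MeasurableSpace Ω] (μ : Measure Ω) [IsProbabilityMeasure μ]
    (φc φ'c φd φ'd : Ω → ℕ) (Yc Yd : Ω → ℕ)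
    (hYc01 : ∀ ω, Yc ω ≤ 1) (hYd01 : ∀ ω, Yd ω ≤ 1)
    (hφc : Measurable φc) (hφ'c : Measurable φ'c)
    (hφd : Measurable φd) (hφ'd : Measurable φ'd)
    (hYc : Measurable Yc) (hYd : Measurable Yd)
    (hindep : IndepFun (fun ω => (φc ω, φ'c ω, Yc ω))
                       (fun ω => (φd ω, φ'd ω, Yd ω)) μ)
    (Ye : Ω → ℕ) (hYe : ∀ ω, Ye ω = max (Yc ω) (Yd ω))
    (φ'e : Ω → ℕ)
    (hφ'e : ∀ ω, φ'e ω =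
      if Yc ω = 1 ∧ Yd ω = 1 then φc ω + φd ω
      else if Yc ω = 1 then φ'c ω
      else if Yd ω = 1 then φ'd ω
      else 0)
    (fc fd f'c f'd f'e : ℕ → ℝ)
    (hfc : ∀ x, fc x = (μ {ω | φc ω = x ∧ Yc ω = 1}).toReal)
    (hfd : ∀ x, fd x = (μ {ω | φd ω = x ∧ Yd ω = 1}).toReal)
    (hf'c : ∀ x, f'c x = (μ {ω | φ'c ω = x ∧ Yc ω = 1}).toReal)
    (hf'd : ∀ x, f'd x = (μ {ω | φ'd ω = x ∧ Yd ω = 1}).toReal)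
    (hf'e : ∀ x, f'e x = (μ {ω | φ'e ω = x ∧ Ye ω = 1}).toReal)
    (Pc Pd : ℝ)
    (hPc : Pc = (μ {ω | Yc ω = 1}).toReal)
    (hPd : Pd = (μ {ω | Yd ω = 1}).toReal) :
    ∀ x : ℕ,
      f'e x = (∑ i ∈ Finset.range (x + 1), fc i * fd (x - i))
        + (1 - Pd) * f'c x + (1 - Pc) * f'd x := by
  intro x
  have hevent : {ω | φ'e ω = x ∧ Ye ω = 1} = {ω | unrootedMerge (φc ω, φ'c ω, Yc ω)
      (φd ω, φ'd ω, Yd ω) = x ∧ (Yc ω = 1 ∨ Yd ω = 1)} := by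
    ext ω
    have := hYc01 ω
    have := hYd01 ω
    rw [Set.mem_ofPred_eq, Set.mem_ofPred_eq, hφ'e ω, hYe ω]
    exact and_congr Iff.rfl (by omega)
  rw [hf'e, ← measureReal_def, hevent, hindep.measureReal_unrootedMerge
    (hφc.prodMk (hφ'c.prodMk hYc)) (hφd.prodMk (hφ'd.prodMk hYd))]
  simp only [hfc, hfd, hf'c, hf'd, hPc, hPd]
  rfl

/-- Let `(φc, φ'c, Yc)` and `(φd, φ'd, Yd)` be two independent triples
of random variables, with `φc, φ'c, φd, φ'd` valued in `ℕ` and `Yc, Yd` valued in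
`{0,1} ⊆ ℕ`, such that a.s. `Yc = 0 → φc = 0 ∧ φ'c = 0` and `Yd = 0 → φd = 0 ∧ φ'd = 0`.
Define `Ye = max Yc Yd` and `φ'e = φc + φd` if `Yc = Yd = 1`, `φ'e = φ'c` if `Yc = 1`,
`Yd = 0`, `φ'e = φ'd` if `Yc = 0`, `Yd = 1`, and `φ'e = 0` otherwise.  With
`f_g(x) = P[φ_g = x, Y_g = 1]`, `f'_g(x) = P[φ'_g = x, Y_g = 1]`, `P_g = P[Y_g = 1]`,
for every `x ∈ ℕ`:
`f'_e(x) = ∑_{i=0}^{x} f_c(i) f_d(x-i) + (1-P_d) f'_c(x) + (1-P_c) f'_d(x)`. -/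
theorem unrooted_PD_distribution_recursion
    {Ω : Type*} [MeasurableSpace Ω] (μ : Measure Ω) [IsProbabilityMeasure μ]
    (φc φ'c φd φ'd : Ω → ℕ) (Yc Yd : Ω → ℕ)
    (hYc01 : ∀ ω, Yc ω ≤ 1) (hYd01 : ∀ ω, Yd ω ≤ 1)
    (hφc : Measurable φc) (hφ'c : Measurable φ'c)
    (hφd : Measurable φd) (hφ'd : Measurable φ'd)
    (hYc : Measurable Yc) (hYd : Measurable Yd)
    (hindep : IndepFun (fun ω => (φc ω, φ'c ω, Yc ω))
                       (fun ω => (φd ω, φ'd ω, Yd ω)) μ)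
    (hc0 : ∀ᵐ ω ∂μ, Yc ω = 0 → φc ω = 0 ∧ φ'c ω = 0)
    (hd0 : ∀ᵐ ω ∂μ, Yd ω = 0 → φd ω = 0 ∧ φ'd ω = 0)
    (Ye : Ω → ℕ) (hYe : ∀ ω, Ye ω = max (Yc ω) (Yd ω))
    (φ'e : Ω → ℕ)
    (hφ'e : ∀ ω, φ'e ω =
      if Yc ω = 1 ∧ Yd ω = 1 then φc ω + φd ω
      else if Yc ω = 1 then φ'c ω
      else if Yd ω = 1 then φ'd ω
      else 0)
    (fc fd f'c f'd f'e : ℕ → ℝ)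
    (hfc : ∀ x, fc x = (μ {ω | φc ω = x ∧ Yc ω = 1}).toReal)
    (hfd : ∀ x, fd x = (μ {ω | φd ω = x ∧ Yd ω = 1}).toReal)
    (hf'c : ∀ x, f'c x = (μ {ω | φ'c ω = x ∧ Yc ω = 1}).toReal)
    (hf'd : ∀ x, f'd x = (μ {ω | φ'd ω = x ∧ Yd ω = 1}).toReal)
    (hf'e : ∀ x, f'e x = (μ {ω | φ'e ω = x ∧ Ye ω = 1}).toReal)
    (Pc Pd : ℝ)
    (hPc : Pc = (μ {ω | Yc ω = 1}).toReal)
    (hPd : Pd = (μ {ω | Yd ω = 1}).toReal) :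
    ∀ x : ℕ,
      f'e x = (∑ i ∈ Finset.range (x + 1), fc i * fd (x - i))
        + (1 - Pd) * f'c x + (1 - Pc) * f'd x :=
  unrooted_PD_distribution_recursion_general μ φc φ'c φd φ'd Yc Yd hYc01 hYd01 hφc hφ'c hφd hφ'd hYc
    hYd hindep Ye hYe φ'e hφ'e fc fd f'c f'd f'e hfc hfd hf'c hf'd hf'e Pc Pd hPc hPd
end
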